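/- Let λ ∈ (0,1], let (A,B) be controllable, and let X ⊆ ℝⁿ and U ⊆ ℝᵐ be C-sets. Let r̲_x, r̄_x, r̲_u > 0 with r̲_x ≤ r̄_x satisfy Bⁿ(r̲_x) ⊆ X ⊆ Bⁿ(r̄_x) and Bᵐ(r̲_u) ⊆ U, let α := max{1, max_{1≤j≤n} ‖A^j‖₂}, let Φ_n := (A^{n−1}B, …, AB, B), let ρ̂ := (λ^{n−1}/α)·min{ r̲_x/(1 + σ_max(Φ_n)/σ_min(Φ_n)), r̲_u·σ_min(Φ_n) }, and set η := 1 − ρ̂/r̄_x. Then d(Q_n^λ(C), Q_n^λ(D)) ≤ η·d(C,D) for all C-sets C, D ⊆ ℝⁿ with C ⊆ D. -/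

import Mathlib

open Set Metric Pointwise

noncomputable section

abbrev Euc (n : ℕ) := EuclideanSpace ℝ (Fin n)

def IsCSet {n : ℕ} (C : Set (Euc n)) : Prop :=
  Convex ℝ C ∧ IsCompact C ∧ (0 : Euc n) ∈ interior C

def rho {n : ℕ} (ξ : Euc n) (C : Set (Euc n)) : ℝ :=
  sSup {μ : ℝ | 0 < μ ∧ μ • ξ ∈ C}

def cdist {n : ℕ} (C D : Set (Euc n)) : ℝ :=
  ⨆ ξ : sphere (0 : Euc n) 1, |Real.log (rho ξ C) - Real.log (rho ξ D)|

def Q1 {n m : ℕ} (A : Matrix (Fin n) (Fin n) ℝ) (B : Matrix (Fin n) (Fin m) ℝ)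
    (X : Set (Euc n)) (U : Set (Euc m)) (lam : ℝ) (D : Set (Euc n)) : Set (Euc n) :=
  {x ∈ X | ∃ u ∈ U, WithLp.toLp 2 (A.mulVec x + B.mulVec u) ∈ lam • D}

def Qiter {n m : ℕ} (A : Matrix (Fin n) (Fin n) ℝ) (B : Matrix (Fin n) (Fin m) ℝ)
    (X : Set (Euc n)) (U : Set (Euc m)) (lam : ℝ) (D : Set (Euc n)) : ℕ → Set (Euc n)
  | 0 => D
  | k + 1 => Q1 A B X U lam (Qiter A B X U lam D k)

def IsContractive {n m : ℕ} (A : Matrix (Fin n) (Fin n) ℝ) (B : Matrix (Fin n) (Fin m) ℝ)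
    (X : Set (Euc n)) (U : Set (Euc m)) (lam : ℝ) (C : Set (Euc n)) : Prop :=
  C ⊆ X ∧ ∀ x ∈ C, ∃ u ∈ U, WithLp.toLp 2 (A.mulVec x + B.mulVec u) ∈ lam • C

def Cmax {n m : ℕ} (A : Matrix (Fin n) (Fin n) ℝ) (B : Matrix (Fin n) (Fin m) ℝ)
    (X : Set (Euc n)) (U : Set (Euc m)) (lam : ℝ) : Set (Euc n) :=
  ⋃₀ {C | IsContractive A B X U lam C}

def ctrb {n m : ℕ} (A : Matrix (Fin n) (Fin n) ℝ) (B : Matrix (Fin n) (Fin m) ℝ) :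
    Matrix (Fin n) (Fin n × Fin m) ℝ :=
  Matrix.of fun i p => (A ^ (n - 1 - (p.1 : ℕ)) * B) i p.2

def Controllable {n m : ℕ} (A : Matrix (Fin n) (Fin n) ℝ)
    (B : Matrix (Fin n) (Fin m) ℝ) : Prop :=
  (ctrb A B).rank = n

def enorm {ι : Type*} [Fintype ι] (v : ι → ℝ) : ℝ :=
  ‖(WithLp.equiv 2 (ι → ℝ)).symm v‖

def sigmaMax {n : ℕ} {ι : Type*} [Fintype ι] (Φ : Matrix (Fin n) ι ℝ) : ℝ :=
  ⨆ ξ : sphere (0 : EuclideanSpace ℝ ι) 1, enorm (Φ.mulVec ξ)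

def sigmaMin {n : ℕ} {ι : Type*} [Fintype ι] (Φ : Matrix (Fin n) ι ℝ) : ℝ :=
  ⨅ ξ : sphere (0 : Euc n) 1, enorm (Φ.transpose.mulVec ξ)

def alphaA {n : ℕ} (A : Matrix (Fin n) (Fin n) ℝ) : ℝ :=
  max 1 (⨆ j ∈ Finset.Icc 1 n, sigmaMax (A ^ j))

def rhoHat {n m : ℕ} (A : Matrix (Fin n) (Fin n) ℝ) (B : Matrix (Fin n) (Fin m) ℝ)
    (lam rx ru : ℝ) : ℝ :=
  lam ^ (n - 1) / alphaA A *
    min (rx / (1 + sigmaMax (ctrb A B) / sigmaMin (ctrb A B)))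
        (ru * sigmaMin (ctrb A B))

end

/-!
Let `γ = exp (-d(C, D))`, so that `γ • D ⊆ C`. Since `X` and `U` are convex, `Qₙ` respects convex
combinations: `γ • Qₙ(D) + (1 - γ) • Qₙ({0}) ⊆ Qₙ(γ • D) ⊆ Qₙ(C)`. Controllability puts the ball
of radius `ρ̂` inside `Qₙ({0})`: the least-norm solution `w` of `Φₙ w = -Aⁿ x` satisfies
`σ_min(Φₙ) ‖w‖ ≤ α ‖x‖`, and applying its blocks as controls drives `x` to the origin in `n` steps
along a trajectory whose states and controls lie in `λʲ Bⁿ(r̲ₓ)` and `λʲ Bᵐ(r̲ᵤ)`. Hence, in each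
direction `ξ`, the radial functions `a = ρ(ξ, Qₙ(C)) ≤ b = ρ(ξ, Qₙ(D)) ≤ r̄ₓ` satisfy
`γ b + (1 - γ) ρ̂ ≤ a`, and convexity of `exp` turns this into
`log b - log a ≤ (1 - ρ̂ / b) d(C, D) ≤ (1 - ρ̂ / r̄ₓ) d(C, D)`.
-/

open Function Matrix

section SphereBounds

variable {E F : Type*} [NormedAddCommGroup E] [NormedSpace ℝ E] [NormedAddCommGroup F]
  [NormedSpace ℝ F]

lemma norm_apply_eq_norm_mul_norm_apply_normalize (f : E →ₗ[ℝ] F) {v : E} (hv : v ≠ 0) :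
    ‖f v‖ = ‖v‖ * ‖f (‖v‖⁻¹ • v)‖ := by
  rw [map_smul, norm_smul, norm_inv, norm_norm, mul_inv_cancel_left₀ (norm_ne_zero_iff.mpr hv)]

lemma inv_norm_smul_mem_sphere {v : E} (hv : v ≠ 0) : ‖v‖⁻¹ • v ∈ sphere (0 : E) 1 :=
  mem_sphere_zero_iff_norm.mpr (norm_smul_inv_norm hv)

lemma ContinuousLinearMap.iSup_sphere_norm_apply_eq_opNorm (f : E →L[ℝ] F) :
    ⨆ ξ : sphere (0 : E) 1, ‖f ξ‖ = ‖f‖ := by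
  rw [← f.sSup_sphere_eq_norm, sSup_image']

lemma LinearMap.iInf_sphere_mul_le_norm_apply (f : E →ₗ[ℝ] F) (v : E) :
    (⨅ ξ : sphere (0 : E) 1, ‖f ξ‖) * ‖v‖ ≤ ‖f v‖ := by
  rcases eq_or_ne v 0 with rfl | hv
  · simp
  have hbdd : BddBelow (Set.range fun ξ : sphere (0 : E) 1 => ‖f ξ‖) :=
    ⟨0, by rintro _ ⟨ξ, rfl⟩; positivity⟩
  rw [norm_apply_eq_norm_mul_norm_apply_normalize f hv, mul_comm]
  gcongr
  exact ciInf_le hbdd ⟨_, inv_norm_smul_mem_sphere hv⟩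

lemma LinearMap.iInf_sphere_norm_apply_pos [FiniteDimensional ℝ E] [Nontrivial E]
    {f : E →ₗ[ℝ] F} (hf : Injective f) : 0 < ⨅ ξ : sphere (0 : E) 1, ‖f ξ‖ := by
  obtain ⟨K, hK, hKf⟩ := f.injective_iff_antilipschitz.mp hf
  have : Nonempty (sphere (0 : E) 1) := (NormedSpace.sphere_nonempty.mpr zero_le_one).to_subtype
  refine (inv_pos.mpr (NNReal.coe_pos.mpr hK)).trans_le (le_ciInf fun ξ => ?_)
  have h := hKf.le_mul_norm (map_zero f) ξ
  rw [mem_sphere_zero_iff_norm.mp ξ.2] at h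
  rwa [inv_le_iff_one_le_mul₀' (NNReal.coe_pos.mpr hK)]

end SphereBounds

section LeastNorm

variable {E F : Type*} [NormedAddCommGroup E] [InnerProductSpace ℝ E] [FiniteDimensional ℝ E]
  [NormedAddCommGroup F] [InnerProductSpace ℝ F] [FiniteDimensional ℝ F]

/-- The witness is the least-norm solution `x = f† ξ`, where `f f† ξ = y`. -/
lemma LinearMap.exists_apply_eq_mul_norm_le (f : E →ₗ[ℝ] F) {c : ℝ} (hc : 0 < c)
    (hf : ∀ ξ, c * ‖ξ‖ ≤ ‖f.adjoint ξ‖) (y : F) : ∃ x, f x = y ∧ c * ‖x‖ ≤ ‖y‖ := by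
  have hsq : ∀ ξ, ‖f.adjoint ξ‖ ^ 2 = inner ℝ ξ (f (f.adjoint ξ)) := fun ξ => by
    rw [← real_inner_self_eq_norm_sq, LinearMap.adjoint_inner_left]
  have hinj : Injective (f ∘ₗ f.adjoint) := by
    refine (injective_iff_map_eq_zero _).mpr fun ξ hξ => norm_le_zero_iff.mp ?_
    have h0 : ‖f.adjoint ξ‖ = 0 := by
      rw [← sq_eq_zero_iff, hsq, ← LinearMap.comp_apply, hξ, inner_zero_right]
    nlinarith [hf ξ, norm_nonneg ξ]
  obtain ⟨ξ, rfl⟩ := LinearMap.injective_iff_surjective.mp hinj y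
  refine ⟨f.adjoint ξ, rfl, ?_⟩
  have hCS : ‖f.adjoint ξ‖ ^ 2 ≤ ‖ξ‖ * ‖f (f.adjoint ξ)‖ :=
    (hsq ξ).trans_le (real_inner_le_norm _ _)
  rw [LinearMap.comp_apply]
  rcases (norm_nonneg (f.adjoint ξ)).eq_or_lt with h0 | hpos
  · rw [← h0, mul_zero]
    positivity
  refine le_of_mul_le_mul_right ?_ hpos
  calc c * ‖f.adjoint ξ‖ * ‖f.adjoint ξ‖ = c * ‖f.adjoint ξ‖ ^ 2 := by ring
    _ ≤ c * ‖ξ‖ * ‖f (f.adjoint ξ)‖ := by rw [mul_assoc]; gcongr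
    _ ≤ ‖f (f.adjoint ξ)‖ * ‖f.adjoint ξ‖ := by rw [mul_comm _ ‖f.adjoint ξ‖]; gcongr; exact hf ξ

end LeastNorm

section Matrices

variable {n : ℕ} {ι : Type*} [Fintype ι]

lemma sigmaMax_nonneg (Φ : Matrix (Fin n) ι ℝ) : 0 ≤ sigmaMax Φ :=
  Real.iSup_nonneg fun _ => norm_nonneg _

lemma sigmaMax_eq_opNorm [DecidableEq ι] (Φ : Matrix (Fin n) ι ℝ) :
    sigmaMax Φ = ‖LinearMap.toContinuousLinearMap Φ.toEuclideanLin‖ := by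
  rw [← ContinuousLinearMap.iSup_sphere_norm_apply_eq_opNorm]
  rfl

lemma norm_toEuclideanLin_le_sigmaMax [DecidableEq ι] (Φ : Matrix (Fin n) ι ℝ)
    (v : EuclideanSpace ℝ ι) :
    ‖Φ.toEuclideanLin v‖ ≤ sigmaMax Φ * ‖v‖ := by
  rw [sigmaMax_eq_opNorm]
  exact (LinearMap.toContinuousLinearMap _).le_opNorm v

lemma sigmaMin_eq_iInf_adjoint [DecidableEq ι] (Φ : Matrix (Fin n) ι ℝ) :
    sigmaMin Φ = ⨅ ξ : sphere (0 : Euc n) 1, ‖Φ.toEuclideanLin.adjoint ξ‖ := by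
  rw [← toEuclideanLin_conjTranspose_eq_adjoint, conjTranspose_eq_transpose_of_trivial]
  rfl

lemma exists_toEuclideanLin_eq_sigmaMin_mul_norm_le [DecidableEq ι] (Φ : Matrix (Fin n) ι ℝ)
    (hΦ : 0 < sigmaMin Φ) (y : Euc n) :
    ∃ w, Φ.toEuclideanLin w = y ∧ sigmaMin Φ * ‖w‖ ≤ ‖y‖ :=
  Φ.toEuclideanLin.exists_apply_eq_mul_norm_le hΦ
    (fun ξ => sigmaMin_eq_iInf_adjoint Φ ▸ LinearMap.iInf_sphere_mul_le_norm_apply _ ξ) y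

lemma sigmaMin_pos (hn : 0 < n) (Φ : Matrix (Fin n) ι ℝ) (hΦ : Φ.rank = n) :
    0 < sigmaMin Φ := by
  have : Nonempty (Fin n) := ⟨⟨0, hn⟩⟩
  have hinj : Injective Φᵀ.mulVecLin := by
    have h := LinearMap.finrank_range_add_finrank_ker Φᵀ.mulVecLin
    rw [← Matrix.rank, Matrix.rank_transpose, hΦ, Module.finrank_fin_fun] at h
    rw [← LinearMap.ker_eq_bot, ← Submodule.finrank_eq_zero]
    omega
  exact LinearMap.iInf_sphere_norm_apply_pos (f := Φᵀ.toEuclideanLin)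
    fun x y h => WithLp.ofLp_injective 2 (hinj (congrArg WithLp.ofLp h))

lemma sigmaMax_le_alphaA (A : Matrix (Fin n) (Fin n) ℝ) {j : ℕ} (hj : j ∈ Finset.Icc 1 n) :
    sigmaMax (A ^ j) ≤ alphaA A := by
  have hbdd : BddAbove (⋃ i, Set.range fun _ : i ∈ Finset.Icc 1 n => sigmaMax (A ^ i)) :=
    ((Finset.Icc 1 n).finite_toSet.image fun i => sigmaMax (A ^ i)).bddAbove.mono <| by
      simp only [Set.iUnion_subset_iff, Set.range_subset_iff]
      exact fun i hi => ⟨i, hi, rfl⟩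
  exact le_max_of_le_right
    (le_ciSup₂ (f := fun i (_ : i ∈ Finset.Icc 1 n) => sigmaMax (A ^ i)) hbdd j hj)

lemma one_le_alphaA (A : Matrix (Fin n) (Fin n) ℝ) : 1 ≤ alphaA A :=
  le_max_left _ _

lemma alphaA_pos (A : Matrix (Fin n) (Fin n) ℝ) : 0 < alphaA A :=
  zero_lt_one.trans_le (one_le_alphaA A)

lemma norm_pow_toEuclideanLin_le (A : Matrix (Fin n) (Fin n) ℝ) {j : ℕ} (hj : j ≤ n)
    (x : Euc n) : ‖(A ^ j).toEuclideanLin x‖ ≤ alphaA A * ‖x‖ := by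
  rcases j.eq_zero_or_pos with rfl | hj0
  · simpa using le_mul_of_one_le_left (norm_nonneg x) (one_le_alphaA A)
  · refine (norm_toEuclideanLin_le_sigmaMax _ x).trans ?_
    gcongr
    exact sigmaMax_le_alphaA A (Finset.mem_Icc.mpr ⟨hj0, hj⟩)

end Matrices

section BlockShift

variable {n m : ℕ}

def shiftBlocks (v : EuclideanSpace ℝ (Fin (n + 1) × Fin m)) :
    EuclideanSpace ℝ (Fin (n + 1) × Fin m) :=
  WithLp.toLp 2 fun p => Fin.cases 0 (fun q : Fin n => v (q.castSucc, p.2)) p.1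

def lastBlock (v : EuclideanSpace ℝ (Fin (n + 1) × Fin m)) : Euc m :=
  WithLp.toLp 2 fun j => v (Fin.last n, j)

lemma norm_shiftBlocks_le (v : EuclideanSpace ℝ (Fin (n + 1) × Fin m)) :
    ‖shiftBlocks v‖ ≤ ‖v‖ := by
  rw [← sq_le_sq₀ (norm_nonneg _) (norm_nonneg _), EuclideanSpace.norm_sq_eq,
    EuclideanSpace.norm_sq_eq, Fintype.sum_prod_type, Fintype.sum_prod_type, Fin.sum_univ_succ,
    Fin.sum_univ_castSucc]
  simp only [shiftBlocks, Fin.cases_zero, Fin.cases_succ, norm_zero, ne_eq, OfNat.ofNat_ne_zero,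
    not_false_eq_true, zero_pow, Finset.sum_const_zero, zero_add, le_add_iff_nonneg_right]
  positivity

lemma norm_lastBlock_le (v : EuclideanSpace ℝ (Fin (n + 1) × Fin m)) :
    ‖lastBlock v‖ ≤ ‖v‖ := by
  rw [← sq_le_sq₀ (norm_nonneg _) (norm_nonneg _), EuclideanSpace.norm_sq_eq,
    EuclideanSpace.norm_sq_eq, Fintype.sum_prod_type, Fin.sum_univ_castSucc]
  simp only [lastBlock, le_add_iff_nonneg_left]
  positivity

lemma norm_shiftBlocks_iterate_le (v : EuclideanSpace ℝ (Fin (n + 1) × Fin m)) (k : ℕ) :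
    ‖shiftBlocks^[k] v‖ ≤ ‖v‖ := by
  induction k with
  | zero => exact le_rfl
  | succ k ih =>
    rw [Function.iterate_succ_apply']
    exact (norm_shiftBlocks_le _).trans ih

lemma shiftBlocks_iterate_apply_of_lt (v : EuclideanSpace ℝ (Fin (n + 1) × Fin m)) {k : ℕ}
    {p : Fin (n + 1)} (hp : (p : ℕ) < k) (j : Fin m) : (shiftBlocks^[k] v) (p, j) = 0 := by
  induction k generalizing p with
  | zero => exact absurd hp (Nat.not_lt_zero _)
  | succ k ih =>
    rw [Function.iterate_succ_apply']
    cases p using Fin.cases with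
    | zero => rfl
    | succ q => exact ih (by simpa using hp)

lemma shiftBlocks_iterate_eq_zero (v : EuclideanSpace ℝ (Fin (n + 1) × Fin m)) :
    shiftBlocks^[n + 1] v = 0 := by
  ext ⟨p, j⟩
  exact shiftBlocks_iterate_apply_of_lt v p.2 j

lemma ctrb_mulVec (A : Matrix (Fin n) (Fin n) ℝ) (B : Matrix (Fin n) (Fin m) ℝ)
    (v : Fin n × Fin m → ℝ) :
    ctrb A B *ᵥ v = ∑ p : Fin n, (A ^ (n - 1 - (p : ℕ)) * B) *ᵥ fun j => v (p, j) := by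
  ext i
  simp only [mulVec, dotProduct, ctrb, of_apply, Fintype.sum_prod_type, Finset.sum_apply]

lemma ctrb_toEuclideanLin (A : Matrix (Fin (n + 1)) (Fin (n + 1)) ℝ)
    (B : Matrix (Fin (n + 1)) (Fin m) ℝ) (v : EuclideanSpace ℝ (Fin (n + 1) × Fin m)) :
    (ctrb A B).toEuclideanLin v =
      A.toEuclideanLin ((ctrb A B).toEuclideanLin (shiftBlocks v)) +
        B.toEuclideanLin (lastBlock v) := by
  apply WithLp.ofLp_injective 2
  simp only [toLpLin_apply, WithLp.ofLp_add, ctrb_mulVec, mulVec_sum]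
  rw [Fin.sum_univ_castSucc, Fin.sum_univ_succ]
  simp only [shiftBlocks, lastBlock, Fin.cases_zero, Fin.cases_succ, Fin.val_last,
    Fin.val_castSucc, Fin.val_succ, mulVec_mulVec]
  have hpow (i : Fin n) : A * (A ^ (n - (i + 1)) * B) = A ^ (n - i) * B := by
    rw [← Matrix.mul_assoc, ← pow_succ']
    congr 2
    omega
  simp only [← Pi.zero_def, mulVec_zero, zero_add, Nat.add_sub_cancel, Nat.sub_self, pow_zero,
    Matrix.one_mul, hpow]

lemma ctrb_shiftBlocks_step (A : Matrix (Fin (n + 1)) (Fin (n + 1)) ℝ)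
    (B : Matrix (Fin (n + 1)) (Fin m) ℝ) (x : Euc (n + 1))
    (v : EuclideanSpace ℝ (Fin (n + 1) × Fin m)) (j : ℕ) :
    A.toEuclideanLin ((A ^ j).toEuclideanLin x + (ctrb A B).toEuclideanLin (shiftBlocks v)) +
        B.toEuclideanLin (lastBlock v) =
      (A ^ (j + 1)).toEuclideanLin x + (ctrb A B).toEuclideanLin v := by
  rw [ctrb_toEuclideanLin A B v, pow_succ' A, toLpLin_mul, LinearMap.comp_apply, map_add,
    add_assoc]

end BlockShift

section Reachability

variable {n m : ℕ} {A : Matrix (Fin n) (Fin n) ℝ} {B : Matrix (Fin n) (Fin m) ℝ}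
  {X : Set (Euc n)} {U : Set (Euc m)} {lam : ℝ}

lemma Q1_mono {D D' : Set (Euc n)} (h : D ⊆ D') : Q1 A B X U lam D ⊆ Q1 A B X U lam D' :=
  fun _ ⟨hx, u, hu, hmem⟩ => ⟨hx, u, hu, smul_set_mono h hmem⟩

lemma Qiter_mono {D D' : Set (Euc n)} (h : D ⊆ D') (k : ℕ) :
    Qiter A B X U lam D k ⊆ Qiter A B X U lam D' k := by
  induction k with
  | zero => exact h
  | succ k ih => exact Q1_mono ih

lemma Qiter_subset_of_ne_zero (D : Set (Euc n)) {k : ℕ} (hk : k ≠ 0) :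
    Qiter A B X U lam D k ⊆ X := by
  obtain ⟨k, rfl⟩ := Nat.exists_eq_succ_of_ne_zero hk
  exact fun _ hx => hx.1

lemma Q1_smul_add_smul_subset (hX : Convex ℝ X) (hU : Convex ℝ U) {a b : ℝ} (ha : 0 ≤ a)
    (hb : 0 ≤ b) (hab : a + b = 1) (D E : Set (Euc n)) :
    a • Q1 A B X U lam D + b • Q1 A B X U lam E ⊆ Q1 A B X U lam (a • D + b • E) := by
  rintro _ ⟨_, ⟨x, ⟨hx, u, hu, y, hy, hxy⟩, rfl⟩, _, ⟨z, ⟨hz, v, hv, w, hw, hzw⟩, rfl⟩, rfl⟩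
  refine ⟨hX hx hz ha hb hab, a • u + b • v, hU hu hv ha hb hab, a • y + b • w,
    ⟨a • y, smul_mem_smul_set hy, b • w, smul_mem_smul_set hw, rfl⟩, ?_⟩
  change lam • y = A.toEuclideanLin x + B.toEuclideanLin u at hxy
  change lam • w = A.toEuclideanLin z + B.toEuclideanLin v at hzw
  change _ = A.toEuclideanLin (a • x + b • z) + B.toEuclideanLin (a • u + b • v)
  simp only [map_add, map_smul]
  linear_combination (norm := module) a • hxy + b • hzw

lemma Qiter_smul_add_smul_subset (hX : Convex ℝ X) (hU : Convex ℝ U) {a b : ℝ} (ha : 0 ≤ a)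
    (hb : 0 ≤ b) (hab : a + b = 1) (D E : Set (Euc n)) (k : ℕ) :
    a • Qiter A B X U lam D k + b • Qiter A B X U lam E k ⊆
      Qiter A B X U lam (a • D + b • E) k := by
  induction k with
  | zero => exact subset_rfl
  | succ k ih => exact (Q1_smul_add_smul_subset hX hU ha hb hab _ _).trans (Q1_mono ih)

lemma mem_Qiter_of_trajectory {D : Set (Euc n)} (xs : ℕ → Euc n) (us : ℕ → Euc m) {k : ℕ}
    (hx : ∀ j < k, xs j ∈ X) (hu : ∀ j < k, us j ∈ U)
    (hstep : ∀ j < k, A.toEuclideanLin (xs j) + B.toEuclideanLin (us j) = lam • xs (j + 1))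
    (hk : xs k ∈ D) : xs 0 ∈ Qiter A B X U lam D k := by
  induction k generalizing xs us with
  | zero => exact hk
  | succ k ih =>
    have h1 : xs 1 ∈ Qiter A B X U lam D k :=
      ih (fun j => xs (j + 1)) (fun j => us (j + 1)) (fun j hj => hx _ (by omega))
        (fun j hj => hu _ (by omega)) (fun j hj => hstep _ (by omega)) hk
    exact ⟨hx 0 k.succ_pos, us 0, hu 0 k.succ_pos, xs 1, h1, (hstep 0 k.succ_pos).symm⟩

end Reachability

section Steering

variable {n m : ℕ} {A : Matrix (Fin n) (Fin n) ℝ} {B : Matrix (Fin n) (Fin m) ℝ} {lam : ℝ}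

lemma norm_inv_pow_smul_le {E : Type*} [SeminormedAddCommGroup E] [NormedSpace ℝ E] {lam r : ℝ}
    (hlam : lam ∈ Ioc 0 1) {j k : ℕ} (hjk : j ≤ k) {v : E} (hv : ‖v‖ ≤ lam ^ k * r) :
    ‖(lam ^ j)⁻¹ • v‖ ≤ r := by
  have hpos : 0 < lam ^ j := pow_pos hlam.1 j
  have hr : 0 ≤ r := nonneg_of_mul_nonneg_right ((norm_nonneg v).trans hv) (pow_pos hlam.1 k)
  rw [norm_smul, norm_inv, Real.norm_of_nonneg hpos.le, inv_mul_le_iff₀ hpos]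
  exact hv.trans (mul_le_mul_of_nonneg_right (pow_le_pow_of_le_one hlam.1.le hlam.2 hjk) hr)

lemma rhoHat_pos (hn : 0 < n) (hAB : Controllable A B) (hlam : 0 < lam) {rx ru : ℝ}
    (hrx : 0 < rx) (hru : 0 < ru) : 0 < rhoHat A B lam rx ru := by
  have := sigmaMin_pos hn _ hAB
  have := sigmaMax_nonneg (ctrb A B)
  have := alphaA_pos A
  unfold rhoHat
  positivity

/-- Here `t` is the norm of the initial state and `s` that of the stacked control steering it to
the origin. -/
lemma bounds_of_le_rhoHat (hσ : 0 < sigmaMin (ctrb A B)) (hlam : 0 ≤ lam) {rx ru t s : ℝ}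
    (ht : t ≤ rhoHat A B lam rx ru) (hs : sigmaMin (ctrb A B) * s ≤ alphaA A * t) :
    alphaA A * t + sigmaMax (ctrb A B) * s ≤ lam ^ (n - 1) * rx ∧ s ≤ lam ^ (n - 1) * ru := by
  have hα := alphaA_pos A
  rw [rhoHat] at ht
  set σm := sigmaMin (ctrb A B)
  set σM := sigmaMax (ctrb A B)
  have hq : 0 < 1 + σM / σm := by have := sigmaMax_nonneg (ctrb A B); positivity
  have hαt : alphaA A * t ≤ lam ^ (n - 1) * min (rx / (1 + σM / σm)) (ru * σm) := by
    calc alphaA A * t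
        ≤ alphaA A * (lam ^ (n - 1) / alphaA A * min (rx / (1 + σM / σm)) (ru * σm)) := by gcongr
      _ = _ := by field_simp
  have hs' : s ≤ alphaA A * t / σm := by rwa [le_div_iff₀ hσ, mul_comm]
  constructor
  · calc alphaA A * t + σM * s ≤ alphaA A * t + σM * (alphaA A * t / σm) := by
          gcongr; exact sigmaMax_nonneg _
      _ = alphaA A * t * (1 + σM / σm) := by ring
      _ ≤ lam ^ (n - 1) * (rx / (1 + σM / σm)) * (1 + σM / σm) :=
          mul_le_mul_of_nonneg_right (hαt.trans (by gcongr; exact min_le_left _ _)) hq.le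
      _ = lam ^ (n - 1) * rx := by rw [mul_assoc, div_mul_cancel₀ _ hq.ne']
  · calc s ≤ alphaA A * t / σm := hs'
      _ ≤ lam ^ (n - 1) * (ru * σm) / σm :=
          div_le_div_of_nonneg_right (hαt.trans (by gcongr; exact min_le_right _ _)) hσ.le
      _ = lam ^ (n - 1) * ru := by rw [← mul_assoc, mul_div_cancel_right₀ _ hσ.ne']

lemma closedBall_rhoHat_subset_Qiter (hn : 0 < n) (hAB : Controllable A B) (hlam : lam ∈ Ioc 0 1)
    {X : Set (Euc n)} {U : Set (Euc m)} {rx ru : ℝ} (hX : closedBall 0 rx ⊆ X)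
    (hU : closedBall 0 ru ⊆ U) :
    closedBall 0 (rhoHat A B lam rx ru) ⊆ Qiter A B X U lam {0} n := by
  obtain ⟨n, rfl⟩ : ∃ k, n = k + 1 := ⟨n - 1, by omega⟩
  intro x hx
  rw [mem_closedBall_zero_iff] at hx
  have hσ : 0 < sigmaMin (ctrb A B) := sigmaMin_pos hn _ hAB
  obtain ⟨w, hw, hwx⟩ :=
    exists_toEuclideanLin_eq_sigmaMin_mul_norm_le _ hσ (-(A ^ (n + 1)).toEuclideanLin x)
  rw [norm_neg] at hwx
  obtain ⟨hstate, hctrl⟩ := bounds_of_le_rhoHat hσ hlam.1.le hx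
    (hwx.trans (norm_pow_toEuclideanLin_le A le_rfl x))
  rw [Nat.add_sub_cancel] at hstate hctrl
  -- `Φ (shiftBlocks^[n + 1 - j] w)` is the effect after `j` steps of the first `j` control
  -- blocks of `w`; states and controls are rescaled by `λ^{-j}` to fit the definition of `Qₖ`.
  let xs : ℕ → Euc (n + 1) := fun j =>
    (lam ^ j)⁻¹ • ((A ^ j).toEuclideanLin x + (ctrb A B).toEuclideanLin (shiftBlocks^[n + 1 - j] w))
  let us : ℕ → Euc m := fun j => (lam ^ j)⁻¹ • lastBlock (shiftBlocks^[n - j] w)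
  have hx0 : xs 0 = x := by simp [xs, shiftBlocks_iterate_eq_zero]
  rw [← hx0]
  refine mem_Qiter_of_trajectory xs us (fun j hj => hX ?_) (fun j hj => hU ?_) (fun j hj => ?_) ?_
  · rw [mem_closedBall_zero_iff]
    refine norm_inv_pow_smul_le hlam (Nat.lt_succ_iff.mp hj) ((norm_add_le _ _).trans ?_)
    refine (add_le_add (norm_pow_toEuclideanLin_le A hj.le x)
      (norm_toEuclideanLin_le_sigmaMax _ _)).trans (le_trans ?_ hstate)
    gcongr
    · exact sigmaMax_nonneg _
    · exact norm_shiftBlocks_iterate_le w _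
  · rw [mem_closedBall_zero_iff]
    exact norm_inv_pow_smul_le hlam (Nat.lt_succ_iff.mp hj)
      ((norm_lastBlock_le _).trans ((norm_shiftBlocks_iterate_le w _).trans hctrl))
  · have hS : shiftBlocks^[n + 1 - j] w = shiftBlocks (shiftBlocks^[n - j] w) := by
      rw [show n + 1 - j = n - j + 1 by omega, Function.iterate_succ_apply']
    have hscal : lam * (lam ^ (j + 1))⁻¹ = (lam ^ j)⁻¹ := by
      rw [pow_succ, mul_inv, mul_left_comm, mul_inv_cancel₀ hlam.1.ne', mul_one]
    simp only [xs, us]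
    rw [show n + 1 - (j + 1) = n - j by omega, hS, smul_smul, hscal, map_smul, map_smul,
      ← smul_add, ctrb_shiftBlocks_step]
  · simp [xs, hw]

end Steering

section RadialFunction

variable {n : ℕ} {S T : Set (Euc n)} {ξ : Euc n} {R : ℝ}

lemma mem_upperBounds_rho_set (hS : S ⊆ closedBall 0 R) (hξ : ‖ξ‖ = 1) :
    R ∈ upperBounds {μ : ℝ | 0 < μ ∧ μ • ξ ∈ S} := fun μ ⟨hμ, hmem⟩ => by
  simpa [norm_smul, hξ, abs_of_pos hμ] using hS hmem

lemma le_rho (hS : S ⊆ closedBall 0 R) (hξ : ‖ξ‖ = 1) {μ : ℝ} (hμ : 0 < μ) (hmem : μ • ξ ∈ S) :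
    μ ≤ rho ξ S :=
  le_csSup ⟨R, mem_upperBounds_rho_set hS hξ⟩ ⟨hμ, hmem⟩

lemma rho_le (hS : S ⊆ closedBall 0 R) (hξ : ‖ξ‖ = 1) {μ : ℝ} (hμ : 0 < μ) (hmem : μ • ξ ∈ S) :
    rho ξ S ≤ R :=
  csSup_le ⟨μ, hμ, hmem⟩ (mem_upperBounds_rho_set hS hξ)

lemma rho_mono (hST : S ⊆ T) (hT : T ⊆ closedBall 0 R) (hξ : ‖ξ‖ = 1) : rho ξ S ≤ rho ξ T := by
  rcases eq_empty_or_nonempty {μ : ℝ | 0 < μ ∧ μ • ξ ∈ S} with h | h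
  · rw [rho, h, Real.sSup_empty]
    exact Real.sSup_nonneg fun μ hμ => hμ.1.le
  · exact csSup_le_csSup ⟨R, mem_upperBounds_rho_set hT hξ⟩ h fun μ ⟨hμ, hm⟩ => ⟨hμ, hST hm⟩

lemma smul_mem_of_le_rho (hS : Convex ℝ S) (hSc : IsClosed S) (h0 : (0 : Euc n) ∈ S) {μ : ℝ}
    (hμ : 0 < μ) (hμρ : μ ≤ rho ξ S) : μ • ξ ∈ S := by
  have hρ : 0 < rho ξ S := hμ.trans_le hμρ
  have hne : {ν : ℝ | 0 < ν ∧ ν • ξ ∈ S}.Nonempty := by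
    by_contra h
    rw [not_nonempty_iff_eq_empty] at h
    simp [rho, h] at hρ
  have hbdd : BddAbove {ν : ℝ | 0 < ν ∧ ν • ξ ∈ S} := by
    by_contra h
    rw [rho, Real.sSup_of_not_bddAbove h] at hρ
    exact hρ.false
  -- the supremum is attained because `S` is closed
  have hmem : rho ξ S • ξ ∈ S := by
    have hcl : IsClosed {ν : ℝ | ν • ξ ∈ S} := hSc.preimage (continuous_id.smul continuous_const)
    exact hcl.closure_subset_iff.mpr (fun ν hν => hν.2) (csSup_mem_closure hne hbdd)
  have h := (hS.starConvex h0).smul_mem hmem (div_nonneg hμ.le hρ.le) ((div_le_one hρ).mpr hμρ)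
  rwa [smul_smul, div_mul_cancel₀ _ hρ.ne'] at h

lemma smul_subset_of_mul_rho_le (hS : Convex ℝ S) (hSc : IsClosed S) (h0 : (0 : Euc n) ∈ S)
    (hT : T ⊆ closedBall 0 R) {c : ℝ} (hc : 0 < c)
    (h : ∀ ξ : Euc n, ‖ξ‖ = 1 → c * rho ξ T ≤ rho ξ S) : c • T ⊆ S := by
  intro y hy
  obtain ⟨z, hz, rfl⟩ := mem_smul_set.mp hy
  rcases eq_or_ne z 0 with rfl | hz0
  · rwa [smul_zero]
  set ξ := ‖z‖⁻¹ • z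
  have hξ : ‖ξ‖ = 1 := norm_smul_inv_norm hz0
  have hzξ : z = ‖z‖ • ξ := by
    rw [smul_smul, mul_inv_cancel₀ (norm_ne_zero_iff.mpr hz0), one_smul]
  have hle : ‖z‖ ≤ rho ξ T := le_rho hT hξ (norm_pos_iff.mpr hz0) (by rwa [← hzξ])
  rw [hzξ, smul_smul]
  exact smul_mem_of_le_rho hS hSc h0 (by positivity)
    ((mul_le_mul_of_nonneg_left hle hc.le).trans (h _ hξ))

lemma IsCSet.exists_rho_mem_Icc {C : Set (Euc n)} (hC : IsCSet C) :
    ∃ r R : ℝ, 0 < r ∧ ∀ ξ : Euc n, ‖ξ‖ = 1 → rho ξ C ∈ Icc r R := by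
  obtain ⟨ε, hε, hball⟩ := Metric.mem_nhds_iff.mp (mem_interior_iff_mem_nhds.mp hC.2.2)
  obtain ⟨R, hR⟩ := hC.2.1.isBounded.subset_closedBall 0
  refine ⟨ε / 2, R, half_pos hε, fun ξ hξ => ?_⟩
  have hmem : (ε / 2) • ξ ∈ C := hball <| by
    rw [mem_ball_zero_iff, norm_smul, hξ, mul_one, Real.norm_of_nonneg (half_pos hε).le]
    exact half_lt_self hε
  exact ⟨le_rho hR hξ (half_pos hε) hmem, rho_le hR hξ (half_pos hε) hmem⟩

lemma IsCSet.rho_pos {C : Set (Euc n)} (hC : IsCSet C) (hξ : ‖ξ‖ = 1) : 0 < rho ξ C := by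
  obtain ⟨r, _, hr, h⟩ := hC.exists_rho_mem_Icc
  exact hr.trans_le (h ξ hξ).1

lemma IsCSet.exists_abs_log_rho_le {C : Set (Euc n)} (hC : IsCSet C) :
    ∃ K, ∀ ξ : Euc n, ‖ξ‖ = 1 → |Real.log (rho ξ C)| ≤ K := by
  obtain ⟨r, R, hr, h⟩ := hC.exists_rho_mem_Icc
  exact ⟨max |Real.log r| |Real.log R|, fun ξ hξ => abs_le_max_abs_abs
    (Real.log_le_log hr (h ξ hξ).1) (Real.log_le_log (hr.trans_le (h ξ hξ).1) (h ξ hξ).2)⟩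

end RadialFunction

section Distance

variable {n : ℕ} {C D : Set (Euc n)}

lemma cdist_of_dim_zero (S T : Set (Euc 0)) : cdist S T = 0 := by
  have : IsEmpty (sphere (0 : Euc 0) 1) :=
    ⟨fun ξ => by simpa [Subsingleton.elim (ξ : Euc 0) 0] using ξ.2⟩
  exact Real.iSup_of_isEmpty _

lemma cdist_nonneg : 0 ≤ cdist C D :=
  Real.iSup_nonneg fun _ => abs_nonneg _

lemma abs_log_rho_sub_le_cdist (hC : IsCSet C) (hD : IsCSet D) {ξ : Euc n} (hξ : ‖ξ‖ = 1) :
    |Real.log (rho ξ C) - Real.log (rho ξ D)| ≤ cdist C D := by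
  obtain ⟨K, hK⟩ := hC.exists_abs_log_rho_le
  obtain ⟨K', hK'⟩ := hD.exists_abs_log_rho_le
  refine le_ciSup (f := fun ξ : sphere (0 : Euc n) 1 => |Real.log (rho ξ C) - Real.log (rho ξ D)|)
    ⟨K + K', ?_⟩ ⟨ξ, mem_sphere_zero_iff_norm.mpr hξ⟩
  rintro _ ⟨ζ, rfl⟩
  have hζ := mem_sphere_zero_iff_norm.mp ζ.2
  exact (abs_sub _ _).trans (add_le_add (hK ζ hζ) (hK' ζ hζ))

lemma exp_neg_cdist_smul_subset (hC : IsCSet C) (hD : IsCSet D) :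
    Real.exp (-cdist C D) • D ⊆ C := by
  obtain ⟨R, hR⟩ := hD.2.1.isBounded.subset_closedBall 0
  refine smul_subset_of_mul_rho_le hC.1 hC.2.1.isClosed (interior_subset hC.2.2) hR
    (Real.exp_pos _) fun ξ hξ => ?_
  have h := (abs_sub_le_iff.mp (abs_log_rho_sub_le_cdist hC hD hξ)).2
  calc Real.exp (-cdist C D) * rho ξ D = Real.exp (Real.log (rho ξ D) - cdist C D) := by
        rw [Real.exp_sub, Real.exp_log (hD.rho_pos hξ), Real.exp_neg, div_eq_inv_mul]
    _ ≤ Real.exp (Real.log (rho ξ C)) := Real.exp_le_exp.mpr (by linarith)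
    _ = rho ξ C := Real.exp_log (hC.rho_pos hξ)

lemma exp_neg_cdist_smul_Qiter_add_smul_subset {m : ℕ} {A : Matrix (Fin n) (Fin n) ℝ}
    {B : Matrix (Fin n) (Fin m) ℝ} {X : Set (Euc n)} {U : Set (Euc m)} {lam : ℝ}
    (hX : Convex ℝ X) (hU : Convex ℝ U) (hC : IsCSet C) (hD : IsCSet D) (k : ℕ) :
    Real.exp (-cdist C D) • Qiter A B X U lam D k +
        (1 - Real.exp (-cdist C D)) • Qiter A B X U lam {0} k ⊆ Qiter A B X U lam C k := by
  refine (Qiter_smul_add_smul_subset hX hU (Real.exp_pos _).le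
    (sub_nonneg.mpr (Real.exp_le_one_iff.mpr (neg_nonpos.mpr cdist_nonneg)))
    (add_sub_cancel _ _) D {0} k).trans (Qiter_mono ?_ k)
  simpa using exp_neg_cdist_smul_subset hC hD

end Distance

/-- With `t = ρ / b`, convexity of `exp` gives `e^{-(1-t) d} ≤ (1 - t) e^{-d} + t`, hence
`b e^{-(1-t) d} ≤ a`. -/
lemma abs_log_sub_log_le {a b ρ R d : ℝ} (hd : 0 ≤ d) (hρ : 0 < ρ) (hρb : ρ ≤ b) (hbR : b ≤ R)
    (hab : a ≤ b) (h : Real.exp (-d) * b + (1 - Real.exp (-d)) * ρ ≤ a) :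
    |Real.log a - Real.log b| ≤ (1 - ρ / R) * d := by
  have hb : 0 < b := hρ.trans_le hρb
  set t := ρ / b
  have ht0 : 0 ≤ t := by positivity
  have ht1 : t ≤ 1 := (div_le_one hb).mpr hρb
  have hconv : Real.exp (-((1 - t) * d)) ≤ (1 - t) * Real.exp (-d) + t := by
    have := convexOn_exp.2 (mem_univ (-d)) (mem_univ 0) (sub_nonneg.mpr ht1) ht0 (by ring)
    simpa [smul_eq_mul, mul_neg] using this
  have hkey : b * Real.exp (-((1 - t) * d)) ≤ a := by
    calc b * Real.exp (-((1 - t) * d)) ≤ b * ((1 - t) * Real.exp (-d) + t) := by gcongr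
      _ = Real.exp (-d) * b + (1 - Real.exp (-d)) * ρ := by
        simp only [t]; field_simp; ring
      _ ≤ a := h
  have ha : 0 < a := lt_of_lt_of_le (by positivity) hkey
  have hlog : Real.log b - (1 - t) * d ≤ Real.log a := by
    have := Real.log_le_log (by positivity) hkey
    rwa [Real.log_mul hb.ne' (Real.exp_pos _).ne', Real.log_exp, ← sub_eq_add_neg] at this
  have htR : ρ / R ≤ t := div_le_div_of_nonneg_left hρ.le hb hbR
  rw [abs_sub_comm, abs_of_nonneg (sub_nonneg.mpr (Real.log_le_log ha hab))]
  nlinarith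

lemma abs_log_rho_sub_le_of_combination {n : ℕ} {S T : Set (Euc n)} {ξ : Euc n} (hξ : ‖ξ‖ = 1)
    {R d ρ : ℝ} (hd : 0 ≤ d) (hρ : 0 < ρ) (hST : S ⊆ T) (hT : T ⊆ closedBall 0 R)
    (hρT : ρ • ξ ∈ T)
    (hcomb : ∀ μ, 0 < μ → μ • ξ ∈ T → (Real.exp (-d) * μ + (1 - Real.exp (-d)) * ρ) • ξ ∈ S) :
    |Real.log (rho ξ S) - Real.log (rho ξ T)| ≤ (1 - ρ / R) * d := by
  have hγ : 0 < Real.exp (-d) := Real.exp_pos _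
  have hγ1 : Real.exp (-d) ≤ 1 := Real.exp_le_one_iff.mpr (neg_nonpos.mpr hd)
  refine abs_log_sub_log_le hd hρ (le_rho hT hξ hρ hρT) (rho_le hT hξ hρ hρT)
    (rho_mono hST hT hξ) ?_
  have hρT' : rho ξ T ≤ (rho ξ S - (1 - Real.exp (-d)) * ρ) / Real.exp (-d) :=
    csSup_le ⟨ρ, hρ, hρT⟩ fun μ ⟨hμ, hm⟩ => by
      have := le_rho (hST.trans hT) hξ (add_pos_of_pos_of_nonneg (mul_pos hγ hμ)
        (mul_nonneg (sub_nonneg.mpr hγ1) hρ.le)) (hcomb μ hμ hm)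
      rw [le_div_iff₀ hγ]
      linarith
  rw [le_div_iff₀ hγ] at hρT'
  linarith

theorem stmt8_general {n m : ℕ} (lam : ℝ) (hlam : lam ∈ Set.Ioc (0 : ℝ) 1)
    (A : Matrix (Fin n) (Fin n) ℝ) (B : Matrix (Fin n) (Fin m) ℝ)
    (hAB : Controllable A B)
    (X : Set (Euc n)) (U : Set (Euc m)) (hX : IsCSet X) (hU : IsCSet U)
    (rxlo rxhi ru : ℝ) (hrxlo : 0 < rxlo) (hru : 0 < ru)
    (hbX1 : closedBall (0 : Euc n) rxlo ⊆ X) (hbX2 : X ⊆ closedBall (0 : Euc n) rxhi)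
    (hbU : closedBall (0 : Euc m) ru ⊆ U) :
    ∀ C D : Set (Euc n), IsCSet C → IsCSet D → C ⊆ D →
      cdist (Qiter A B X U lam C n) (Qiter A B X U lam D n)
        ≤ (1 - rhoHat A B lam rxlo ru / rxhi) * cdist C D := by
  intro C D hC hD hCD
  rcases Nat.eq_zero_or_pos n with rfl | hn
  · simp only [cdist_of_dim_zero, mul_zero, le_refl]
  set ρ := rhoHat A B lam rxlo ru
  have hρ : 0 < ρ := rhoHat_pos hn hAB hlam.1 hrxlo hru
  have hsteer : closedBall 0 ρ ⊆ Qiter A B X U lam {0} n :=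
    closedBall_rhoHat_subset_Qiter hn hAB hlam hbX1 hbU
  have : Nonempty (Fin n) := ⟨⟨0, hn⟩⟩
  have : Nonempty (sphere (0 : Euc n) 1) := (NormedSpace.sphere_nonempty.mpr zero_le_one).to_subtype
  refine ciSup_le fun ξ => ?_
  have hξ := mem_sphere_zero_iff_norm.mp ξ.2
  have hρξ : ρ • (ξ : Euc n) ∈ Qiter A B X U lam {0} n :=
    hsteer (by simp [norm_smul, hξ, abs_of_pos hρ])
  refine abs_log_rho_sub_le_of_combination hξ cdist_nonneg hρ (Qiter_mono hCD n)
    ((Qiter_subset_of_ne_zero D hn.ne').trans hbX2)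
    (Qiter_mono (singleton_subset_iff.mpr (interior_subset hD.2.2)) n hρξ) fun μ _ hμ => ?_
  convert exp_neg_cdist_smul_Qiter_add_smul_subset hX.1 hU.1 hC hD n
    (add_mem_add (smul_mem_smul_set hμ) (smul_mem_smul_set hρξ)) using 1
  module

theorem stmt8 {n m : ℕ} (lam : ℝ) (hlam : lam ∈ Set.Ioc (0 : ℝ) 1)
    (A : Matrix (Fin n) (Fin n) ℝ) (B : Matrix (Fin n) (Fin m) ℝ)
    (hAB : Controllable A B)
    (X : Set (Euc n)) (U : Set (Euc m)) (hX : IsCSet X) (hU : IsCSet U)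
    (rxlo rxhi ru : ℝ) (hrxlo : 0 < rxlo) (hrx : rxlo ≤ rxhi) (hru : 0 < ru)
    (hbX1 : closedBall (0 : Euc n) rxlo ⊆ X) (hbX2 : X ⊆ closedBall (0 : Euc n) rxhi)
    (hbU : closedBall (0 : Euc m) ru ⊆ U) :
    ∀ C D : Set (Euc n), IsCSet C → IsCSet D → C ⊆ D →
      cdist (Qiter A B X U lam C n) (Qiter A B X U lam D n)
        ≤ (1 - rhoHat A B lam rxlo ru / rxhi) * cdist C D :=
  stmt8_general lam hlam A B hAB X U hX hU rxlo rxhi ru hrxlo hru hbX1 hbX2 hbU
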